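/- Let V be a finite type, c : V → V → ℝ≥0 a capacity function, S ⊆ V a subset, P ≥ 1 an integer, and s, t distinct vertices of V with s ∉ S and t ∉ S. Then the P-fold replication c_P of S admits a minimum s-t cut A (with the unique copies of s and t satisfying s ∈ A, t ∉ A) such that for every v ∈ S and all i, j : Fin P, the copy (v,i) lies in A if and only if the copy (v,j) lies in A; that is, all P copies of every vertex lie on the same side of the cut. -/

import Mathlib

/-!
The value of a cut of the replicated graph splits into the edges among the vertices outside `S`
and, for each copy index `i`, a slice term that depends only on the cut's vertices outside `S`
and its `i`-th copies, because distinct copies of `S` are not joined. Moving every copy to the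
side of its copy in a slice `i₀` of least value keeps the first part and lowers every slice term
to the least one, so the value does not increase. Doing this to a minimum cut gives a minimum cut
with all copies of each vertex on the same side.
-/

open Finset

attribute [local instance] Classical.propDecidable

noncomputable section

/-- The value of the cut `A` for the capacity function `c`. -/
def cutValue {W : Type*} [Fintype W] (c : W → W → NNReal) (A : Finset W) : NNReal :=
  ∑ u ∈ A, ∑ v ∈ Aᶜ, c u v

/-- `A` is a minimum `s`-`t` cut for the capacity function `c`. -/
def IsMinCut {W : Type*} [Fintype W] (c : W → W → NNReal) (s t : W) (A : Finset W) : Prop :=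
  s ∈ A ∧ t ∉ A ∧ ∀ B : Finset W, s ∈ B → t ∉ B → cutValue c A ≤ cutValue c B

/-- The capacity function of the `P`-fold replication of the subset `S`. -/
def repCap {V : Type*} (c : V → V → NNReal) (S : Set V) (P : ℕ) :
    ({v : V // v ∉ S} ⊕ (↥S × Fin P)) → ({v : V // v ∉ S} ⊕ (↥S × Fin P)) → NNReal
  | Sum.inl u, Sum.inl v => c u.1 v.1
  | Sum.inl u, Sum.inr (v, _) => c u.1 v.1
  | Sum.inr (v, _), Sum.inl u => c v.1 u.1
  | Sum.inr (u, i), Sum.inr (v, j) => if i = j then c u.1 v.1 else 0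

theorem cutValue_eq_sum_ite {W : Type*} [Fintype W] (c : W → W → NNReal) (A : Finset W) :
    cutValue c A = ∑ u, ∑ v, if u ∈ A ∧ v ∉ A then c u v else 0 := by
  simp only [cutValue, ite_and, sum_ite_irrel, sum_const_zero, ← sum_filter, filter_mem_eq_inter,
    univ_inter, ← mem_compl]

theorem exists_isMinCut {W : Type*} [Fintype W] (c : W → W → NNReal) {s t : W} (hst : s ≠ t) :
    ∃ A, IsMinCut c s t A := by
  obtain ⟨A, hA, hmin⟩ := exists_min_image ({B | s ∈ B ∧ t ∉ B} : Finset (Finset W))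
    (cutValue c) ⟨{s}, by simp [hst.symm]⟩
  simp only [mem_filter_univ] at hA hmin
  exact ⟨A, hA.1, hA.2, fun B hsB htB => hmin B ⟨hsB, htB⟩⟩

namespace Replication

variable {V : Type*} [Fintype V] {S : Set V} {P : ℕ}

def outerPart (A : Finset ({v : V // v ∉ S} ⊕ (↥S × Fin P))) : Set {v : V // v ∉ S} :=
  {u | Sum.inl u ∈ A}

def copyPart (A : Finset ({v : V // v ∉ S} ⊕ (↥S × Fin P))) (i : Fin P) : Set S :=
  {v | Sum.inr (v, i) ∈ A}

variable (c : V → V → NNReal)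

def outerCutValue (L : Set {v : V // v ∉ S}) : NNReal :=
  ∑ u, ∑ v, if u ∈ L ∧ v ∉ L then c u v else 0

def sliceCutValue (L : Set {v : V // v ∉ S}) (T : Set S) : NNReal :=
  (∑ u, ∑ v : S, if u ∈ L ∧ v ∉ T then c u v else 0) +
    (∑ v : S, ∑ u, if v ∈ T ∧ u ∉ L then c v u else 0) +
    ∑ v : S, ∑ w : S, if v ∈ T ∧ w ∉ T then c v w else 0

theorem cutValue_repCap (A : Finset ({v : V // v ∉ S} ⊕ (↥S × Fin P))) :
    cutValue (repCap c S P) A = outerCutValue c (outerPart A) +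
      ∑ i, sliceCutValue c (outerPart A) (copyPart A i) := by
  have diag : ∀ (i : Fin P) (v : S), (∑ j, ∑ w : S,
      if Sum.inr (v, i) ∈ A ∧ Sum.inr (w, j) ∉ A then (if i = j then c v w else 0) else 0) =
      ∑ w : S, if Sum.inr (v, i) ∈ A ∧ Sum.inr (w, i) ∉ A then c v w else 0 := fun i v => by
    rw [sum_eq_single i (fun j _ hj => by simp [Ne.symm hj]) (by simp)]
    simp
  simp only [cutValue_eq_sum_ite, Fintype.sum_sum_type, Fintype.sum_prod_type_right, repCap,
    outerCutValue, sliceCutValue, outerPart, copyPart, Set.mem_ofPred_eq, sum_add_distrib, diag]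
  rw [sum_comm (s := (univ : Finset {v : V // v ∉ S})) (t := (univ : Finset (Fin P)))]
  ac_rfl

def replicate (A : Finset ({v : V // v ∉ S} ⊕ (↥S × Fin P))) (i₀ : Fin P) :
    Finset ({v : V // v ∉ S} ⊕ (↥S × Fin P)) :=
  {x | Sum.elim (fun u => Sum.inl u ∈ A) (fun p => Sum.inr (p.1, i₀) ∈ A) x}

variable {A : Finset ({v : V // v ∉ S} ⊕ (↥S × Fin P))} {i₀ : Fin P}

@[simp]
theorem inl_mem_replicate {u : {v : V // v ∉ S}} :
    Sum.inl u ∈ replicate A i₀ ↔ Sum.inl u ∈ A := by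
  simp [replicate]

@[simp]
theorem inr_mem_replicate {v : S} {i : Fin P} :
    Sum.inr (v, i) ∈ replicate A i₀ ↔ Sum.inr (v, i₀) ∈ A := by
  simp [replicate]

theorem cutValue_replicate_le
    (hi₀ : ∀ i, sliceCutValue c (outerPart A) (copyPart A i₀) ≤
      sliceCutValue c (outerPart A) (copyPart A i)) :
    cutValue (repCap c S P) (replicate A i₀) ≤ cutValue (repCap c S P) A := by
  have outer : outerPart (replicate A i₀) = outerPart A := by ext; simp [outerPart]
  have copy (i : Fin P) : copyPart (replicate A i₀) i = copyPart A i₀ := by ext; simp [copyPart]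
  rw [cutValue_repCap, cutValue_repCap, outer]
  simp only [copy]
  gcongr with i
  exact hi₀ i

end Replication

theorem exists_minCut_copies_same_side {V : Type*} [Fintype V]
    (c : V → V → NNReal) (S : Set V) (P : ℕ) (hP : 1 ≤ P)
    (s t : V) (hst : s ≠ t) (hs : s ∉ S) (ht : t ∉ S) :
    ∃ A : Finset ({v : V // v ∉ S} ⊕ (↥S × Fin P)),
      IsMinCut (repCap c S P) (Sum.inl ⟨s, hs⟩) (Sum.inl ⟨t, ht⟩) A ∧
      ∀ (v : ↥S) (i j : Fin P), Sum.inr (v, i) ∈ A ↔ Sum.inr (v, j) ∈ A := by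
  obtain ⟨A, hsA, htA, hmin⟩ := exists_isMinCut (repCap c S P)
    (s := Sum.inl ⟨s, hs⟩) (t := Sum.inl ⟨t, ht⟩) (by simpa using hst)
  have : Nonempty (Fin P) := ⟨⟨0, hP⟩⟩
  obtain ⟨i₀, hi₀⟩ := Finite.exists_min fun i =>
    Replication.sliceCutValue c (Replication.outerPart A) (Replication.copyPart A i)
  refine ⟨Replication.replicate A i₀,
    ⟨by simpa using hsA, by simpa using htA, fun B hsB htB => ?_⟩, fun v i j => by simp⟩
  exact (Replication.cutValue_replicate_le c hi₀).trans (hmin B hsB htB)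

end
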